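/- arXiv:2102.01967 — 4 statements merged into one kernel-verified Lean document; each statement's English description precedes it below -/
import Mathlib

section
/- Let p be a rational prime, r a positive integer, and m ≠ 1 a squarefree rational integer such that F(x) = x^(p^r) − m is irreducible over ℚ. Let α be a complex root of F and K = ℚ(α) with ring of integers Z_K. If ν_p(m^p − m) = 1 (where ν_p denotes the p-adic valuation), then Z_K = ℤ[α]; in particular K is monogenic and α generates a power integral basis of Z_K. -/
open Polynomial NumberField

/-!
The discriminant of `X ^ p ^ r - m` is `± (p ^ r) ^ p ^ r * m ^ (p ^ r - 1)`, so `ℤ[α]` is the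
whole ring of integers as soon as it is `q`-maximal for `q = p` and for every prime `q ∣ m`, and
`ℤ[θ]` is `q`-maximal whenever the minimal polynomial of some translate `θ - c` is Eisenstein
at `q`. For `q ∣ m` the polynomial `X ^ p ^ r - m` itself is Eisenstein, `m` being squarefree.
For `q = p` the translate `(X + m) ^ p ^ r - m` is: modulo `p` it is `X ^ p ^ r` by Frobenius,
and its constant term `m ^ p ^ r - m` is congruent to `m ^ p - m` modulo `p²`, hence not
divisible by `p²` when `ν_p(m ^ p - m) = 1`.
-/

namespace Int

theorem natCast_dvd_pow_prime_pow_sub_self {p : ℕ} [Fact p.Prime] (m : ℤ) (s : ℕ) :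
    (p : ℤ) ∣ m ^ p ^ s - m := by
  rw [← ZMod.intCast_zmod_eq_zero_iff_dvd]
  push_cast
  rw [ZMod.pow_card_pow, sub_self]

theorem natCast_sq_dvd_pow_prime_pow_sub_pow {p r : ℕ} [Fact p.Prime] (hr : r ≠ 0) (m : ℤ) :
    (p : ℤ) ^ 2 ∣ m ^ p ^ r - m ^ p := by
  obtain ⟨s, rfl⟩ := Nat.exists_eq_succ_of_ne_zero hr
  simpa [← pow_mul, ← pow_succ] using
    dvd_sub_pow_of_dvd_sub (natCast_dvd_pow_prime_pow_sub_self m s) 1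

theorem not_sq_dvd_pow_prime_pow_sub_self_of_padicValInt_eq_one {p r : ℕ} [Fact p.Prime]
    (hr : r ≠ 0) {m : ℤ} (hm : padicValInt p (m ^ p - m) = 1) : ¬(p : ℤ) ^ 2 ∣ m ^ p ^ r - m := by
  intro h
  have h' : (p : ℤ) ^ 2 ∣ m ^ p - m := by
    simpa using dvd_sub h (natCast_sq_dvd_pow_prime_pow_sub_pow hr m)
  rcases (padicValInt_dvd_iff 2 _).mp h' with h0 | h2
  · simp [h0] at hm
  · omega

end Int

namespace Polynomial

theorem isEisensteinAt_X_pow_sub_C {R : Type*} [CommRing R] {q a : R} (hq : Prime q)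
    (hqa : q ∣ a) (ha : Squarefree a) {n : ℕ} (hn : n ≠ 0) :
    (X ^ n - C a).IsEisensteinAt (Ideal.span {q}) := by
  have : Nontrivial R := ⟨q, 0, hq.ne_zero⟩
  refine (monic_X_pow_sub_C a hn).isEisensteinAt_of_mem_of_notMem ?_ (fun {i} hi => ?_) ?_
  · simpa [Ideal.span_singleton_eq_top] using hq.not_isUnit
  · rw [natDegree_X_pow_sub_C] at hi
    rw [coeff_sub, coeff_X_pow, if_neg hi.ne, coeff_C, zero_sub, neg_mem_iff]
    split_ifs
    exacts [Ideal.mem_span_singleton.mpr hqa, Ideal.zero_mem _]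
  · rw [coeff_sub, coeff_X_pow, if_neg hn.symm, coeff_C_zero, zero_sub, neg_mem_iff,
      Ideal.span_singleton_pow, Ideal.mem_span_singleton]
    exact fun h => hq.not_isUnit (ha q (sq q ▸ h))

theorem isEisensteinAt_X_pow_sub_C_comp_X_add_C {p r : ℕ} [hp : Fact p.Prime] {m : ℤ}
    (hm : ¬(p : ℤ) ^ 2 ∣ m ^ p ^ r - m) :
    ((X ^ p ^ r - C m).comp (X + C m)).IsEisensteinAt (Ideal.span {(p : ℤ)}) := by
  have hn : p ^ r ≠ 0 := pow_ne_zero r hp.out.ne_zero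
  have hmonic := (monic_X_pow_sub_C m hn).comp_X_add_C m
  -- Frobenius: `(X + m) ^ p ^ r ≡ X ^ p ^ r + m ^ p ^ r ≡ X ^ p ^ r + m` modulo `p`.
  have hmod :
      ((X ^ p ^ r - C m).comp (X + C m)).map (Int.castRingHom (ZMod p)) = X ^ p ^ r := by
    simp only [sub_comp, pow_comp, X_comp, C_comp, Polynomial.map_sub, Polynomial.map_pow,
      Polynomial.map_add, map_X, map_C, add_pow_char_pow, ← C_pow, ZMod.pow_card_pow,
      add_sub_cancel_right]
  refine hmonic.isEisensteinAt_of_mem_of_notMem ?_ (fun {i} hi => ?_) ?_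
  · simpa [Ideal.span_singleton_eq_top] using (Nat.prime_iff_prime_int.mp hp.out).not_isUnit
  · rw [natDegree_comp, natDegree_X_pow_sub_C, natDegree_X_add_C, mul_one] at hi
    rw [Ideal.mem_span_singleton, ← ZMod.intCast_zmod_eq_zero_iff_dvd,
      ← eq_intCast (Int.castRingHom _), ← coeff_map, hmod, coeff_X_pow, if_neg hi.ne]
  · simpa [coeff_zero_eq_eval_zero, Ideal.span_singleton_pow, Ideal.mem_span_singleton] using hm

theorem exists_isEisensteinAt_X_pow_sub_C_comp_X_add_C {p r : ℕ} [hp : Fact p.Prime]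
    (hr : r ≠ 0) {m : ℤ} (hm : Squarefree m) (hval : padicValInt p (m ^ p - m) = 1) {q : ℤ}
    (hq : Prime q) (hqpm : q ∣ p ∨ q ∣ m) :
    ∃ c : ℤ, ((X ^ p ^ r - C m).comp (X + C c)).IsEisensteinAt (Ideal.span {q}) := by
  rcases hqpm with hqp | hqm
  · have hspan : Ideal.span {q} = Ideal.span {(p : ℤ)} :=
      Ideal.span_singleton_eq_span_singleton.mpr
        (hq.associated_of_dvd (Nat.prime_iff_prime_int.mp hp.out) hqp)
    exact ⟨m, hspan ▸ isEisensteinAt_X_pow_sub_C_comp_X_add_C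
      (Int.not_sq_dvd_pow_prime_pow_sub_self_of_padicValInt_eq_one hr hval)⟩
  · refine ⟨0, ?_⟩
    rw [C_0, add_zero, comp_X]
    exact isEisensteinAt_X_pow_sub_C hq hqm hm (pow_ne_zero r hp.out.ne_zero)

end Polynomial

theorem Algebra.adjoin_singleton_sub_algebraMap {R A : Type*} [CommRing R] [Ring A] [Algebra R A]
    (x : A) (c : R) : adjoin R {x - algebraMap R A c} = adjoin R {x} := by
  apply le_antisymm <;> apply adjoin_singleton_le
  · exact sub_mem (self_mem_adjoin_singleton R x) (Subalgebra.algebraMap_mem _ c)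
  · simpa using add_mem (self_mem_adjoin_singleton R (x - algebraMap R A c))
      (Subalgebra.algebraMap_mem _ c)

theorem Subalgebra.mem_of_smul_mem_of_forall_prime_dvd {R A : Type*} [CommRing R] [IsDomain R]
    [UniqueFactorizationMonoid R] [CommRing A] [Algebra R A] (S : Subalgebra R A) {c : R}
    (hc : c ≠ 0) (hS : ∀ q, Prime q → q ∣ c → ∀ z, IsIntegral R z → q • z ∈ S → z ∈ S)
    {z : A} (hz : IsIntegral R z) (hcz : c • z ∈ S) : z ∈ S := by
  induction c using UniqueFactorizationMonoid.induction_on_prime generalizing z with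
  | h₁ => exact absurd rfl hc
  | h₂ u hu =>
    obtain ⟨u, rfl⟩ := hu
    simpa [smul_smul] using S.smul_mem hcz ↑u⁻¹
  | h₃ a q ha hq ih =>
    rw [mul_smul] at hcz
    exact ih ha (fun q' hq' h => hS q' hq' (h.mul_left q)) hz
      (hS q hq (dvd_mul_right q a) _ (hz.smul a) hcz)

section Eisenstein

variable {R K L : Type*} [CommRing R] [IsDomain R] [IsIntegrallyClosed R] [Field K] [Field L]
  [Algebra R K] [IsFractionRing R K] [Algebra K L] [Algebra R L] [IsScalarTower R K L]

theorem mem_adjoin_of_smul_prime_smul_of_minpoly_comp_isEisensteinAt {p : R}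
    (B : PowerBasis K L) (hp : Prime p) (hBint : IsIntegral R B.gen) (c : R) {z : L}
    (hzint : IsIntegral R z) (hz : p • z ∈ Algebra.adjoin R {B.gen})
    (hei : ((minpoly R B.gen).comp (X + C c)).IsEisensteinAt (Submodule.span R {p})) :
    z ∈ Algebra.adjoin R {B.gen} := by
  set y := B.gen - algebraMap R L c with hy
  have hyint : IsIntegral R y := hBint.sub isIntegral_algebraMap
  have hmin : minpoly R y = (minpoly R B.gen).comp (X + C c) := by
    apply map_injective (algebraMap R K) (IsFractionRing.injective R K)
    rw [← minpoly.isIntegrallyClosed_eq_field_fractions' K hyint, Polynomial.map_comp,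
      ← minpoly.isIntegrallyClosed_eq_field_fractions' K hBint, hy,
      IsScalarTower.algebraMap_apply R K L, minpoly.sub_algebraMap]
    simp
  have hgen : B.gen ∈ Algebra.adjoin K {y} := by
    rw [hy, IsScalarTower.algebraMap_apply R K L, Algebra.adjoin_singleton_sub_algebraMap]
    exact Algebra.self_mem_adjoin_singleton K _
  let B' := PowerBasis.ofAdjoinEqTop hyint.tower_top (B.adjoin_eq_top_of_gen_mem_adjoin hgen)
  rw [← Algebra.adjoin_singleton_sub_algebraMap B.gen c] at hz ⊢
  exact mem_adjoin_of_smul_prime_smul_of_minpoly_isEisensteinAt (B := B') hp hyint hzint hz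
    (hmin ▸ hei)

end Eisenstein

theorem Algebra.discr_powerBasis_of_minpoly_eq_X_pow_sub_C {K L : Type*} [Field K] [Field L]
    [Algebra K L] [Algebra.IsSeparable K L] (B : PowerBasis K L) {n : ℕ} {a : K}
    (h : minpoly K B.gen = X ^ n - C a) :
    discr K B.basis = (-1) ^ (n * (n - 1) / 2 + (n + 1) * (n - 1)) * (n ^ n * a ^ (n - 1)) := by
  have := B.finite
  have hdim : B.dim = n := by rw [← B.natDegree_minpoly, h, natDegree_X_pow_sub_C]
  have hn : n ≠ 0 := hdim ▸ B.dim_pos.ne'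
  have hnorm : Algebra.norm K B.gen = (-1) ^ (n + 1) * a := by
    rw [Algebra.PowerBasis.norm_gen_eq_coeff_zero_minpoly, h, hdim, coeff_sub, coeff_X_pow,
      if_neg hn.symm, coeff_C_zero]
    ring
  rw [discr_powerBasis_eq_norm, h, derivative_sub, derivative_X_pow, derivative_C, sub_zero,
    map_mul, map_pow, aeval_X, aeval_C, map_mul, Algebra.norm_algebraMap, map_pow, hnorm,
    B.finrank, hdim]
  ring

theorem NumberField.RingOfIntegers.adjoin_eq_top_of_forall_isIntegral_mem {K : Type*} [Field K]
    {θ : 𝓞 K} (h : ∀ z : K, IsIntegral ℤ z → z ∈ Algebra.adjoin ℤ {(θ : K)}) :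
    Algebra.adjoin ℤ {θ} = ⊤ := by
  refine eq_top_iff.mpr fun w _ => ?_
  have hw := h w (isIntegral_coe w)
  rw [show ((θ : K)) = (algebraMap (𝓞 K) K).toIntAlgHom θ from rfl, ← Set.image_singleton,
    ← AlgHom.map_adjoin] at hw
  obtain ⟨w', hw', heq⟩ := hw
  exact coe_injective heq ▸ hw'

theorem pure_field_monogenic_of_padicValInt_eq_one_general
    (p r : ℕ) (hp : p.Prime) (hr : 0 < r) (m : ℤ) (hm : Squarefree m)
    (hF : Irreducible ((X : ℚ[X]) ^ p ^ r - C (m : ℚ)))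
    (K : Type*) [Field K] [NumberField K] (α : 𝓞 K)
    (hgen : IntermediateField.adjoin ℚ {(α : K)} = ⊤)
    (hroot : (α : K) ^ p ^ r = (m : K))
    (hval : padicValInt p (m ^ p - m) = 1) :
    Algebra.adjoin ℤ {α} = ⊤ := by
  have : Fact p.Prime := ⟨hp⟩
  set n := p ^ r
  have hαint : IsIntegral ℤ (α : K) := RingOfIntegers.isIntegral_coe α
  have hminℚ : minpoly ℚ (α : K) = X ^ n - C (m : ℚ) :=
    (minpoly.eq_of_irreducible_of_monic hF (by simp [hroot])
      (monic_X_pow_sub_C _ (pow_ne_zero r hp.ne_zero))).symm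
  have hminℤ : minpoly ℤ (α : K) = X ^ n - C m := by
    apply map_injective (algebraMap ℤ ℚ) (RingHom.injective_int _)
    rw [← minpoly.isIntegrallyClosed_eq_field_fractions' ℚ hαint, hminℚ]
    simp
  let B : PowerBasis ℚ K :=
    .ofAdjoinEqTop hαint.tower_top (IntermediateField.adjoin_eq_top_iff.mp hgen)
  set D : ℤ := (-1) ^ (n * (n - 1) / 2 + (n + 1) * (n - 1)) * (n ^ n * m ^ (n - 1))
  have hdiscr : Algebra.discr ℚ B.basis = D := by
    rw [Algebra.discr_powerBasis_of_minpoly_eq_X_pow_sub_C B hminℚ]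
    simp [D]
  refine RingOfIntegers.adjoin_eq_top_of_forall_isIntegral_mem fun z hz => ?_
  have hDz := Algebra.discr_mul_isIntegral_mem_adjoin ℚ (B := B) hαint hz
  rw [hdiscr, Int.cast_smul_eq_zsmul] at hDz
  have hD : ∀ q : ℤ, Prime q → q ∣ D → q ∣ p ∨ q ∣ m := fun q hq hqD => by
    rw [(isUnit_neg_one.pow _).dvd_mul_left, hq.dvd_mul, Nat.cast_pow] at hqD
    exact hqD.imp (fun h => hq.dvd_of_dvd_pow (hq.dvd_of_dvd_pow h)) hq.dvd_of_dvd_pow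
  refine Subalgebra.mem_of_smul_mem_of_forall_prime_dvd _ (by simp [D, hm.ne_zero])
    (fun q hq hqD z hz hqz => ?_) hz hDz
  obtain ⟨c, hc⟩ :=
    exists_isEisensteinAt_X_pow_sub_C_comp_X_add_C hr.ne' hm hval hq (hD q hq hqD)
  exact mem_adjoin_of_smul_prime_smul_of_minpoly_comp_isEisensteinAt B hq hαint c hz hqz
    (hminℤ ▸ hc)

/-- **Theorem (Ben Yakkou–El Fadil).** Let `p` be a prime, `r ≥ 1`, and `m ≠ 1` a
squarefree integer such that `x^(p^r) - m` is irreducible over `ℚ`. Let `K = ℚ(α)`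
where `α` is a root of this polynomial. If `ν_p(m^p - m) = 1` then the ring of
integers of `K` is `ℤ[α]`; in particular `α` generates a power integral basis. -/
theorem pure_field_monogenic_of_padicValInt_eq_one
    (p r : ℕ) (hp : p.Prime) (hr : 0 < r) (m : ℤ) (hm : Squarefree m) (hm1 : m ≠ 1)
    (hF : Irreducible ((X : ℚ[X]) ^ p ^ r - C (m : ℚ)))
    (K : Type*) [Field K] [NumberField K] (α : 𝓞 K)
    (hgen : IntermediateField.adjoin ℚ {(α : K)} = ⊤)
    (hroot : (α : K) ^ p ^ r = (m : K))
    (hval : padicValInt p (m ^ p - m) = 1) :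
    Algebra.adjoin ℤ {α} = ⊤ :=
  pure_field_monogenic_of_padicValInt_eq_one_general p r hp hr m hm hF K α hgen hroot hval
end

section
/- Let p be a rational prime and K a number field with ring of integers Z_K. For a positive integer f, let P_f be the number of distinct nonzero prime ideals of Z_K lying above p with residue degree f over p, and let N_f be the number of monic irreducible polynomials of degree f in 𝔽_p[x]. If P_f > N_f for some positive integer f, then p is a common index divisor of K, i.e., p divides the index (Z_K : ℤ[θ]) for every θ ∈ Z_K with K = ℚ(θ). -/
/-!
If `p` does not divide `(Z_K : ℤ[θ])`, then the index lies in the conductor of `ℤ[θ]`, so `p` is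
prime to the conductor and Dedekind–Kummer gives `Z_K ⧸ p ≃ 𝔽_p[X] ⧸ (m_θ mod p)`. A prime `P`
above `p` with `Z_K ⧸ P` of order `p ^ f` then pulls back to a prime ideal of `𝔽_p[X]` with
quotient of order `p ^ f`, i.e. one generated by a monic irreducible polynomial of degree `f`,
and distinct primes give distinct polynomials. Hence `P_f ≤ N_f`.
-/

open Polynomial NumberField

/-- The index `(Z_K : ℤ[θ])` of the order `ℤ[θ]` in the ring of integers,
as the index of the underlying additive subgroup. -/
noncomputable def ringOfIntegersIndex {K : Type*} [Field K] [NumberField K] (θ : 𝓞 K) : ℕ :=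
  (Subalgebra.toSubmodule (Algebra.adjoin ℤ {θ})).toAddSubgroup.index

theorem Polynomial.finite_setOf_natDegree_le (R : Type*) [CommRing R] [Finite R] (n : ℕ) :
    {g : R[X] | g.natDegree ≤ n}.Finite := by
  refine Set.finite_coe_iff.mp <| Finite.of_injective
    (fun g : {g : R[X] | g.natDegree ≤ n} => fun i : Fin (n + 1) => g.1.coeff i) ?_
  rintro ⟨g, hg⟩ ⟨g', hg'⟩ hgg'
  ext i
  rcases le_or_gt i n with hi | hi
  · exact congrFun hgg' ⟨i, Nat.lt_succ_of_le hi⟩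
  · rw [coeff_eq_zero_of_natDegree_lt (hg.trans_lt hi),
      coeff_eq_zero_of_natDegree_lt (hg'.trans_lt hi)]

theorem Polynomial.natCard_quotient_span_singleton {𝔽 : Type*} [Field 𝔽] [Finite 𝔽]
    {g : 𝔽[X]} (hg : g ≠ 0) : Nat.card (𝔽[X] ⧸ Ideal.span {g}) = Nat.card 𝔽 ^ g.natDegree := by
  let b := AdjoinRoot.powerBasis hg
  have : Module.Finite 𝔽 (AdjoinRoot g) := b.finite
  have : Fintype 𝔽 := Fintype.ofFinite 𝔽
  have : Fintype (AdjoinRoot g) := Module.fintypeOfFintype b.basis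
  change Nat.card (AdjoinRoot g) = _
  rw [Nat.card_eq_fintype_card, Nat.card_eq_fintype_card, Module.card_eq_pow_finrank (K := 𝔽),
    b.finrank, AdjoinRoot.powerBasis_dim]

theorem Polynomial.exists_monic_irreducible_eq_span_of_isPrime {𝔽 : Type*} [Field 𝔽] [Finite 𝔽]
    {Q : Ideal 𝔽[X]} [Q.IsPrime] {f : ℕ} (hQ : Nat.card (𝔽[X] ⧸ Q) = Nat.card 𝔽 ^ f) :
    ∃ g : 𝔽[X], g.Monic ∧ Irreducible g ∧ g.natDegree = f ∧ Q = Ideal.span {g} := by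
  classical
  have hQ_ne_bot : Q ≠ ⊥ := by
    rintro rfl
    rw [Nat.card_congr (RingEquiv.quotientBot 𝔽[X]).toEquiv, Nat.card_eq_zero_of_infinite] at hQ
    exact (pow_ne_zero f Nat.card_pos.ne') hQ.symm
  have hgen := Submodule.IsPrincipal.prime_generator_of_isPrime Q hQ_ne_bot
  set g := normalize (Submodule.IsPrincipal.generator Q)
  have hg_prime : Prime g := (normalize_associated _).symm.prime hgen
  have hQg : Q = Ideal.span {g} := by
    rw [Ideal.span_singleton_eq_span_singleton.mpr (normalize_associated _),
      Ideal.span_singleton_generator]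
  refine ⟨g, monic_normalize hgen.ne_zero, hg_prime.irreducible, ?_, hQg⟩
  refine Nat.pow_right_injective (Finite.one_lt_card (α := 𝔽)) (?_ : _ ^ _ = _ ^ _)
  rw [← natCard_quotient_span_singleton hg_prime.ne_zero, ← hQg, hQ]

theorem Ideal.exists_injective_primes_of_surjective {A S : Type*} [CommRing A] [CommRing S]
    {I : Ideal S} {ψ : A →+* S ⧸ I} (hψ : Function.Surjective ψ) (n : ℕ) :
    ∃ Φ : {P : Ideal S // P.IsPrime ∧ I ≤ P ∧ Nat.card (S ⧸ P) = n} →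
        {Q : Ideal A // Q.IsPrime ∧ Nat.card (A ⧸ Q) = n}, Function.Injective Φ := by
  let χ (P : {P : Ideal S // P.IsPrime ∧ I ≤ P ∧ Nat.card (S ⧸ P) = n}) : A →+* S ⧸ P.1 :=
    (Ideal.Quotient.factor P.2.2.1).comp ψ
  have hχ P : Function.Surjective (χ P) := (Ideal.Quotient.factor_surjective P.2.2.1).comp hψ
  -- `P` is recovered from `ker (χ P)` by pushing forward along `ψ` and pulling back to `S`
  have recover P : ((RingHom.ker (χ P)).map ψ).comap (Ideal.Quotient.mk I) = P.1 := by
    rw [← RingHom.comap_ker, Ideal.map_comap_of_surjective _ hψ, RingHom.comap_ker,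
      Ideal.Quotient.factor_comp_mk, Ideal.mk_ker]
  refine ⟨fun P => ⟨RingHom.ker (χ P), ?_, ?_⟩, fun P P' h => Subtype.ext ?_⟩
  · have := P.2.1
    exact RingHom.ker_isPrime _
  · rw [Nat.card_congr (RingHom.quotientKerEquivOfSurjective (hχ P)).toEquiv, P.2.2.2]
  · have hker : RingHom.ker (χ P) = RingHom.ker (χ P') := congrArg Subtype.val h
    rw [← recover P, ← recover P', hker]

theorem exists_injective_primes_to_monic_irreducible {S 𝔽 : Type*} [CommRing S] [Field 𝔽]
    [Finite 𝔽] {I : Ideal S} {M : Ideal 𝔽[X]} (E : S ⧸ I ≃+* 𝔽[X] ⧸ M) (f : ℕ) :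
    ∃ Φ : {P : Ideal S // P.IsPrime ∧ I ≤ P ∧ Nat.card (S ⧸ P) = Nat.card 𝔽 ^ f} →
        {g : 𝔽[X] // g.Monic ∧ Irreducible g ∧ g.natDegree = f}, Function.Injective Φ := by
  obtain ⟨Φ, hΦ⟩ := Ideal.exists_injective_primes_of_surjective
    (ψ := E.symm.toRingHom.comp (Ideal.Quotient.mk M))
    (E.symm.surjective.comp Ideal.Quotient.mk_surjective) (Nat.card 𝔽 ^ f)
  have hgen (Q : {Q : Ideal 𝔽[X] // Q.IsPrime ∧ Nat.card (𝔽[X] ⧸ Q) = Nat.card 𝔽 ^ f}) :=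
    have := Q.2.1
    Polynomial.exists_monic_irreducible_eq_span_of_isPrime Q.2.2
  choose g hg_monic hg_irred hg_deg hg_span using hgen
  refine ⟨fun P => ⟨g (Φ P), hg_monic _, hg_irred _, hg_deg _⟩, fun P P' h => hΦ ?_⟩
  exact Subtype.ext <| (hg_span _).trans <| (congrArg (Ideal.span {·.1}) h).trans (hg_span _).symm

namespace NumberField

variable {K : Type*} [Field K] [NumberField K]

theorem ringOfIntegersIndex_mem_conductor (θ : 𝓞 K) :
    (ringOfIntegersIndex θ : 𝓞 K) ∈ conductor ℤ θ :=
  mem_conductor_iff.mpr fun b => by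
    rw [← nsmul_eq_mul]
    exact AddSubgroup.nsmul_index_mem
      (Subalgebra.toSubmodule (Algebra.adjoin ℤ {θ})).toAddSubgroup b

theorem comap_conductor_sup_span_eq_top_of_not_dvd_index {p : ℕ} (hp : p.Prime) {θ : 𝓞 K}
    (hdvd : ¬ p ∣ ringOfIntegersIndex θ) :
    (conductor ℤ θ).comap (algebraMap ℤ (𝓞 K)) ⊔ Ideal.span {(p : ℤ)} = ⊤ := by
  have hN : (ringOfIntegersIndex θ : ℤ) ∈ (conductor ℤ θ).comap (algebraMap ℤ (𝓞 K)) := by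
    rw [Ideal.mem_comap, map_natCast]
    exact ringOfIntegersIndex_mem_conductor θ
  obtain ⟨a, b, hab⟩ : IsCoprime (ringOfIntegersIndex θ : ℤ) p := by
    rw [Int.isCoprime_iff_gcd_eq_one, Int.gcd_natCast_natCast]
    exact (hp.coprime_iff_not_dvd.mpr hdvd).symm
  rw [Ideal.eq_top_iff_one, ← hab]
  exact Submodule.add_mem_sup (Ideal.mul_mem_left _ a hN)
    (Ideal.mul_mem_left _ b (Ideal.mem_span_singleton_self _))

theorem exists_injective_primes_over_to_monic_irreducible {p : ℕ} [Fact p.Prime] {θ : 𝓞 K}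
    (hdvd : ¬ p ∣ ringOfIntegersIndex θ) (f : ℕ) :
    ∃ Φ : {P : Ideal (𝓞 K) // P.IsPrime ∧ (p : 𝓞 K) ∈ P ∧ Nat.card (𝓞 K ⧸ P) = p ^ f} →
        {g : (ZMod p)[X] // g.Monic ∧ Irreducible g ∧ g.natDegree = f}, Function.Injective Φ := by
  let I : Ideal ℤ := Ideal.span {(p : ℤ)}
  have hI : I.map (algebraMap ℤ (𝓞 K)) = Ideal.span {(p : 𝓞 K)} := by
    rw [Ideal.map_span, Set.image_singleton, map_natCast]
  -- Dedekind–Kummer: `𝓞 K ⧸ p ≃ 𝔽_p[X] ⧸ (minpoly θ mod p)` as `p` is prime to the conductor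
  let E := (KummerDedekind.quotMapEquivQuotQuotMap
      (comap_conductor_sup_span_eq_top_of_not_dvd_index Fact.out hdvd)
      (IsIntegral.of_finite ℤ θ)).trans
    (Ideal.quotientEquiv _ _ (mapEquiv (Int.quotientSpanNatEquivZMod p)) rfl)
  obtain ⟨Φ, hΦ⟩ := exists_injective_primes_to_monic_irreducible E f
  refine ⟨fun P => Φ ⟨P.1, P.2.1, ?_, ?_⟩, fun P P' h => Subtype.ext (Subtype.mk.inj (hΦ h))⟩
  · rw [hI, Ideal.span_singleton_le_iff_mem]
    exact P.2.2.1
  · rw [Nat.card_zmod]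
    exact P.2.2.2

end NumberField

theorem prime_is_common_index_divisor_of_card_primes_gt_general
    (p : ℕ) (hp : p.Prime) (K : Type*) [Field K] [NumberField K]
    (f : ℕ)
    (h : Nat.card {g : Polynomial (ZMod p) // g.Monic ∧ Irreducible g ∧ g.natDegree = f}
        < Nat.card {P : Ideal (𝓞 K) //
            P.IsPrime ∧ P ≠ ⊥ ∧ (p : 𝓞 K) ∈ P ∧ Nat.card (𝓞 K ⧸ P) = p ^ f}) :
    ∀ θ : 𝓞 K, IntermediateField.adjoin ℚ {(θ : K)} = ⊤ →
      p ∣ ringOfIntegersIndex θ := by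
  have : Fact p.Prime := ⟨hp⟩
  intro θ _
  by_contra hdvd
  obtain ⟨Φ, hΦ⟩ := exists_injective_primes_over_to_monic_irreducible hdvd f
  have : Finite {g : (ZMod p)[X] // g.Monic ∧ Irreducible g ∧ g.natDegree = f} :=
    ((finite_setOf_natDegree_le (ZMod p) f).subset fun g hg => hg.2.2.le).to_subtype
  refine h.not_ge (Nat.card_le_card_of_injective (fun P => Φ ⟨P.1, P.2.1, P.2.2.2⟩) ?_)
  exact fun P P' hPP' => Subtype.ext (Subtype.mk.inj (hΦ hPP'))

/-- If the number of distinct nonzero primes of `Z_K` above `p` with residue degree `f`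
(equivalently, residue field of cardinality `p^f`) exceeds the number of monic
irreducible polynomials of degree `f` over `𝔽_p`, then `p` is a common index divisor
of `K`. -/
theorem prime_is_common_index_divisor_of_card_primes_gt
    (p : ℕ) (hp : p.Prime) (K : Type*) [Field K] [NumberField K]
    (f : ℕ) (hf : 0 < f)
    (h : Nat.card {g : Polynomial (ZMod p) // g.Monic ∧ Irreducible g ∧ g.natDegree = f}
        < Nat.card {P : Ideal (𝓞 K) //
            P.IsPrime ∧ P ≠ ⊥ ∧ (p : 𝓞 K) ∈ P ∧ Nat.card (𝓞 K ⧸ P) = p ^ f}) :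
    ∀ θ : 𝓞 K, IntermediateField.adjoin ℚ {(θ : K)} = ⊤ →
      p ∣ ringOfIntegersIndex θ :=
  prime_is_common_index_divisor_of_card_primes_gt_general p hp K f h
end

section
/- Let p be a rational prime and K a number field with ring of integers Z_K. If the number of distinct nonzero prime ideals of Z_K lying above p with residue degree 1 over p is strictly greater than p, then p is a common index divisor of K, i.e., p divides the index (Z_K : ℤ[θ]) for every θ ∈ Z_K with K = ℚ(θ). -/
open Polynomial NumberField

/-!
A prime `𝔭` of residue degree one above `p` is the kernel of a ring hom `Z_K → 𝔽_p`, and distinct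
primes give distinct homs. If the index `N = (Z_K : ℤ[θ])` is prime to `p`, then `N • Z_K ⊆ ℤ[θ]`
with `N` invertible in `𝔽_p`, so a hom `Z_K → 𝔽_p` is determined by its restriction to `ℤ[θ]`,
hence by the image of `θ`. There are therefore at most `p` such homs, and at most `p` such primes.
-/

theorem Ideal.exists_ringHom_zmod_ker_eq {R : Type*} [CommRing R] {p : ℕ} (hp : p.Prime)
    (P : Ideal R) (hcard : Nat.card (R ⧸ P) = p) :
    ∃ f : R →+* ZMod p, RingHom.ker f = P := by
  have : Finite (R ⧸ P) := Nat.finite_of_card_ne_zero (hcard ▸ hp.ne_zero)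
  have : Fintype (R ⧸ P) := Fintype.ofFinite _
  let e := ZMod.ringEquivOfPrime (R ⧸ P) hp (Fintype.card_eq_nat_card.trans hcard)
  exact ⟨e.symm.toRingHom.comp (Ideal.Quotient.mk P),
    (RingHom.ker_equiv_comp _ _).trans (Ideal.mk_ker)⟩

theorem RingHom.ext_of_eqOn_of_index_ne_zero {R S : Type*} [Ring R] [Ring S]
    [NoZeroDivisors S] {A : AddSubgroup R} (hA : (A.index : S) ≠ 0) {f g : R →+* S}
    (hfg : ∀ x ∈ A, f x = g x) : f = g := by
  ext x
  have hNx : f (A.index * x) = g (A.index * x) := by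
    simpa only [nsmul_eq_mul] using hfg _ (A.nsmul_index_mem x)
  rw [map_mul, map_mul, map_natCast, map_natCast] at hNx
  exact mul_left_cancel₀ hA hNx

theorem RingHom.eqOn_adjoin_singleton {R S : Type*} [Ring R] [Ring S] {θ : R}
    {f g : R →+* S} (hθ : f θ = g θ) : ∀ x ∈ Algebra.adjoin ℤ {θ}, f x = g x := fun _ hx =>
  AlgHom.adjoin_le_equalizer f.toIntAlgHom g.toIntAlgHom (Set.eqOn_singleton.mpr hθ) hx

theorem RingHom.apply_injective_of_not_dvd_index {R : Type*} [CommRing R] {p : ℕ}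
    [Fact p.Prime] (θ : R)
    (hθ : ¬ p ∣ (Subalgebra.toSubmodule (Algebra.adjoin ℤ {θ})).toAddSubgroup.index) :
    Function.Injective fun f : R →+* ZMod p => f θ := fun _ _ hfg =>
  RingHom.ext_of_eqOn_of_index_ne_zero (mt (ZMod.natCast_eq_zero_iff _ p).mp hθ)
    (RingHom.eqOn_adjoin_singleton hfg)

/-- If the number of distinct nonzero primes of `Z_K` above `p` with residue degree `1`
(equivalently, residue field of cardinality `p`) is strictly greater than `p`, then `p`
is a common index divisor of `K`. -/
theorem prime_is_common_index_divisor_of_card_primes_gt_p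
    (p : ℕ) (hp : p.Prime) (K : Type*) [Field K] [NumberField K]
    (h : p < Nat.card {P : Ideal (𝓞 K) //
            P.IsPrime ∧ P ≠ ⊥ ∧ (p : 𝓞 K) ∈ P ∧ Nat.card (𝓞 K ⧸ P) = p}) :
    ∀ θ : 𝓞 K, IntermediateField.adjoin ℚ {(θ : K)} = ⊤ →
      p ∣ ringOfIntegersIndex θ := by
  intro θ _
  by_contra hθ
  have : Fact p.Prime := ⟨hp⟩
  choose φ hφ using fun P : {P : Ideal (𝓞 K) //
      P.IsPrime ∧ P ≠ ⊥ ∧ (p : 𝓞 K) ∈ P ∧ Nat.card (𝓞 K ⧸ P) = p} =>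
    P.1.exists_ringHom_zmod_ker_eq hp P.2.2.2.2
  have hφ_inj : Function.Injective φ := fun P Q hPQ =>
    Subtype.ext <| by rw [← hφ P, ← hφ Q, hPQ]
  have hle := Nat.card_le_card_of_injective _
    ((RingHom.apply_injective_of_not_dvd_index θ hθ).comp hφ_inj)
  rw [Nat.card_zmod] at hle
  omega
end

section
/- Let p be a rational prime, r a positive integer, and m ≠ 1 a squarefree rational integer not divisible by p, such that F(x) = x^(p^r) − m is irreducible over ℚ. Let α be a complex root of F and K = ℚ(α) with ring of integers Z_K. If ν_p(m^(p−1) − 1) ≥ 2, then p divides the index (Z_K : ℤ[α]). -/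
/-!
Write `n = p^r` and `γ = α - m`. Modulo `p`, Frobenius gives `(X - m)^n ≡ X^n - m^n`, and the
difference vanishes at `m`, so `γ^n = (m - m^n) + p γ b` with `b ∈ ℤ[α]`. Since
`p² ∣ m^(p-1) - 1 ∣ m^(n-1) - 1`, this reads `γ^n = p (p t + γ b)`. Then `θ = γ^(n-1) / p` satisfies
`θ² = b θ + γ^(n-2) t`, so it is an algebraic integer. It does not lie in `ℤ[α]`: otherwise
`(X - m)^(n-1) ≡ p ρ` modulo the minimal polynomial `X^n - m` with `deg ρ < n`, and comparing
leading coefficients gives `p ∣ 1`. Hence `θ` has order `p` in `Z_K / ℤ[α]`.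
-/

open Polynomial NumberField

theorem dvd_pow_pow_sub_self_of_dvd_pow_sub_one {R : Type*} [CommRing R] {a m : R} {p : ℕ}
    (hp : 0 < p) (h : a ∣ m ^ (p - 1) - 1) (r : ℕ) : a ∣ m ^ p ^ r - m := by
  have hpr : p ^ r = p ^ r - 1 + 1 := (Nat.sub_add_cancel (Nat.one_le_pow _ _ hp)).symm
  have hdvd : p - 1 ∣ p ^ r - 1 := by simpa using Nat.sub_one_dvd_pow_sub_one p r
  calc a ∣ m * (m ^ (p ^ r - 1) - 1) := (h.trans (dvd_pow_sub_one_of_dvd hdvd)).mul_left m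
    _ = m ^ p ^ r - m := by rw [mul_sub, ← pow_succ', ← hpr, mul_one]

theorem exists_X_sub_C_pow_prime_pow_eq {p : ℕ} (hp : p.Prime) (r : ℕ) (m : ℤ) :
    ∃ B : ℤ[X], (X - C m) ^ p ^ r = X ^ p ^ r - C (m ^ p ^ r) + C (p : ℤ) * (X - C m) * B := by
  have : Fact p.Prime := ⟨hp⟩
  obtain ⟨H, hH⟩ : C (p : ℤ) ∣ (X - C m) ^ p ^ r - (X ^ p ^ r - C (m ^ p ^ r)) := by
    refine (C_dvd_iff_dvd_coeff _ _).mpr fun i ↦ ?_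
    have hmod : ((X - C m) ^ p ^ r - (X ^ p ^ r - C (m ^ p ^ r))).map
        (Int.castRingHom (ZMod p)) = 0 := by
      simp [sub_pow_char_pow]
    simpa only [coeff_map, coeff_zero, eq_intCast, ZMod.intCast_zmod_eq_zero_iff_dvd] using
      congrArg (coeff · i) hmod
  have hHm : H.IsRoot m := by
    have hHeval := congrArg (eval m) hH
    simpa [hp.pos.ne', hp.ne_zero] using hHeval.symm
  obtain ⟨B, rfl⟩ := dvd_iff_isRoot.mpr hHm
  exact ⟨B, by linear_combination hH⟩

theorem exists_sub_intCast_pow_eq_mul {S : Type*} [CommRing S] {p : ℕ} (hp : p.Prime) {r : ℕ}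
    {m : ℤ} (hm : (p : ℤ) ^ 2 ∣ m ^ p ^ r - m) {a : S} (ha : a ^ p ^ r = m) :
    ∃ t b : S, (a - m) ^ p ^ r = p * (p * t + (a - m) * b) := by
  obtain ⟨B, hB⟩ := exists_X_sub_C_pow_prime_pow_eq hp r m
  obtain ⟨t, ht⟩ := hm
  have hB' := congrArg (aeval a) hB
  have ht' := congrArg (Int.cast : ℤ → S) ht
  simp only [map_add, map_sub, map_mul, map_pow, aeval_X, aeval_C, map_natCast,
    Int.cast_sub, Int.cast_mul, Int.cast_pow, Int.cast_natCast, ha] at hB' ht'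
  exact ⟨-t, aeval a B, by linear_combination hB' - ht'⟩

theorem IsIntegrallyClosed.dvd_pow_succ_of_pow_eq {R : Type*} [CommRing R] [IsDomain R]
    [IsIntegrallyClosed R] {q γ t b : R} {k : ℕ} (hq : q ≠ 0)
    (h : γ ^ (k + 2) = q * (q * t + γ * b)) : q ∣ γ ^ (k + 1) := by
  let K := FractionRing R
  have hinj := IsFractionRing.injective R K
  have hq' : algebraMap R K q ≠ 0 := (map_ne_zero_iff _ hinj).mpr hq
  let x : K := algebraMap R K (γ ^ (k + 1)) / algebraMap R K q
  have hqx : algebraMap R K q * x = algebraMap R K (γ ^ (k + 1)) := mul_div_cancel₀ _ hq'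
  have hx2 : x ^ 2 = algebraMap R K b * x + algebraMap R K (γ ^ k * t) := by
    have hK := congrArg (algebraMap R K) h
    simp only [map_pow, map_mul, map_add] at hK hqx ⊢
    refine mul_left_cancel₀ (pow_ne_zero 2 hq') ?_
    linear_combination (algebraMap R K q * x + algebraMap R K γ ^ (k + 1) -
      algebraMap R K q * algebraMap R K b) * hqx + algebraMap R K γ ^ k * hK
  have hint : IsIntegral R x := by
    refine ⟨X ^ 2 - (C b * X + C (γ ^ k * t)), monic_X_pow_sub ?_, by simp [hx2]⟩
    refine (degree_add_le _ _).trans_lt (max_lt ?_ ?_)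
    · exact (degree_C_mul_X_le b).trans_lt (by norm_num)
    · exact degree_C_le.trans_lt (by norm_num)
  obtain ⟨y, hy⟩ := IsIntegrallyClosed.algebraMap_eq_of_integral hint
  exact ⟨y, hinj (by rw [map_mul, hy, hqx])⟩

theorem notMem_adjoin_of_algebraMap_mul_eq_aeval {R S : Type*} [CommRing R] [IsDomain R]
    [IsIntegrallyClosed R] [CommRing S] [IsDomain S] [Algebra R S] [Module.IsTorsionFree R S]
    {α : S} (hα : IsIntegral R α) {g : R[X]} (hg : g.Monic)
    (hdeg : g.natDegree < (minpoly R α).natDegree) {q : R} (hq : ¬IsUnit q) {θ : S}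
    (hθ : algebraMap R S q * θ = aeval α g) : θ ∉ Algebra.adjoin R {α} := by
  rw [Algebra.adjoin_singleton_eq_range_aeval]
  rintro ⟨ρ, rfl⟩
  set ρ' := ρ %ₘ minpoly R α
  have hρ' : aeval α ρ' = aeval α ρ := aeval_modByMonic_eq_self_of_root (minpoly.aeval R α)
  have hρ'deg : ρ'.natDegree < (minpoly R α).natDegree :=
    natDegree_modByMonic_lt _ (minpoly.monic hα) (minpoly.ne_one R α)
  have hzero : g - C q * ρ' = 0 := by
    refine eq_zero_of_dvd_of_natDegree_lt (minpoly.isIntegrallyClosed_dvd hα ?_) ?_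
    · simp [hρ', ← hθ]
    · exact (natDegree_sub_le _ _).trans_lt
        (max_lt hdeg ((natDegree_C_mul_le _ _).trans_lt hρ'deg))
  have hlead := congrArg (coeff · g.natDegree) hzero
  simp only [coeff_sub, coeff_C_mul, hg.coeff_natDegree, coeff_zero, sub_eq_zero] at hlead
  exact hq (IsUnit.of_mul_eq_one _ hlead.symm)

theorem AddSubgroup.prime_dvd_index_of_nsmul_mem {G : Type*} [AddCommGroup G] {H : AddSubgroup G}
    {p : ℕ} (hp : p.Prime) {x : G} (hx : x ∉ H) (hpx : p • x ∈ H) : p ∣ H.index := by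
  have : Fact p.Prime := ⟨hp⟩
  have horder : addOrderOf (x : G ⧸ H) = p := addOrderOf_eq_prime
    (by rwa [← QuotientAddGroup.mk_nsmul, QuotientAddGroup.eq_zero_iff])
    (by rwa [ne_eq, QuotientAddGroup.eq_zero_iff])
  exact index_eq_card H ▸ horder ▸ _root_.addOrderOf_dvd_natCard _

theorem NumberField.RingOfIntegers.natDegree_minpoly_int_eq {K : Type*} [Field K]
    [NumberField K] (α : 𝓞 K) : (minpoly ℤ α).natDegree = (minpoly ℚ (α : K)).natDegree := by
  rw [minpoly.isIntegrallyClosed_eq_field_fractions ℚ K (RingOfIntegers.isIntegral α),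
    (minpoly.monic (RingOfIntegers.isIntegral α)).natDegree_map]

theorem prime_dvd_index_of_two_le_padicValInt_general
    (p r : ℕ) (hp : p.Prime) (hr : 0 < r) (m : ℤ)
    (hF : Irreducible ((X : ℚ[X]) ^ p ^ r - C (m : ℚ)))
    (K : Type*) [Field K] [NumberField K] (α : 𝓞 K)
    (hroot : (α : K) ^ p ^ r = (m : K))
    (hval : 2 ≤ padicValInt p (m ^ (p - 1) - 1)) :
    p ∣ ringOfIntegersIndex α := by
  obtain ⟨k, hk⟩ : ∃ k, p ^ r = k + 2 :=
    ⟨p ^ r - 2, by have := Nat.one_lt_pow hr.ne' hp.one_lt; omega⟩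
  have hm : (p : ℤ) ^ 2 ∣ m ^ p ^ r - m := dvd_pow_pow_sub_self_of_dvd_pow_sub_one hp.pos
    ((padicValInt_dvd_iff_of_ne_one hp.ne_one 2 _).mpr (Or.inr hval)) r
  obtain ⟨t, b, hγ⟩ := exists_sub_intCast_pow_eq_mul hp hm (a := α)
    (RingOfIntegers.coe_injective (by simpa using hroot))
  obtain ⟨θ, hθ⟩ := IsIntegrallyClosed.dvd_pow_succ_of_pow_eq (mod_cast hp.ne_zero) (hk ▸ hγ)
  have hdeg : (minpoly ℤ α).natDegree = p ^ r := by
    rw [RingOfIntegers.natDegree_minpoly_int_eq, ← natDegree_X_pow_sub_C (n := p ^ r) (r := (m : ℚ))]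
    refine congrArg natDegree (minpoly.eq_of_irreducible_of_monic hF ?_ ?_).symm
    · simp [hroot]
    · exact monic_X_pow_sub_C _ (by omega)
  have hθ_notMem : θ ∉ Algebra.adjoin ℤ {α} := by
    refine notMem_adjoin_of_algebraMap_mul_eq_aeval (RingOfIntegers.isIntegral α)
      ((monic_X_sub_C m).pow (k + 1)) ?_ (Nat.prime_iff_prime_int.mp hp).not_isUnit (by simp [hθ])
    rw [natDegree_pow, natDegree_X_sub_C, hdeg, hk]
    omega
  refine AddSubgroup.prime_dvd_index_of_nsmul_mem hp (x := θ) hθ_notMem ?_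
  rw [nsmul_eq_mul, ← hθ]
  exact pow_mem (sub_mem (Algebra.self_mem_adjoin_singleton ℤ α) (intCast_mem _ m)) _

/-- Let `K = ℚ(α)` where `α` is a root of the irreducible polynomial `x^(p^r) - m`,
`m ≠ 1` squarefree and not divisible by the prime `p`. If `ν_p(m^(p-1) - 1) ≥ 2`,
then `p` divides the index `(Z_K : ℤ[α])`. -/
theorem prime_dvd_index_of_two_le_padicValInt
    (p r : ℕ) (hp : p.Prime) (hr : 0 < r) (m : ℤ) (hm : Squarefree m) (hm1 : m ≠ 1)
    (hpm : ¬ (p : ℤ) ∣ m)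
    (hF : Irreducible ((X : ℚ[X]) ^ p ^ r - C (m : ℚ)))
    (K : Type*) [Field K] [NumberField K] (α : 𝓞 K)
    (hgen : IntermediateField.adjoin ℚ {(α : K)} = ⊤)
    (hroot : (α : K) ^ p ^ r = (m : K))
    (hval : 2 ≤ padicValInt p (m ^ (p - 1) - 1)) :
    p ∣ ringOfIntegersIndex α :=
  prime_dvd_index_of_two_le_padicValInt_general p r hp hr m hF K α hroot hval
end
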